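/- arXiv:2104.04723 — 2 statements merged into one kernel-verified Lean document; each statement's English description precedes it below -/
import Mathlib

section
/- Let α* > 0 and ρ0 > 0 be real numbers. Then for every integer k ≥ 1 there exists a real number μ with μ·α* ∈ ((k−1)π + π/2, kπ) satisfying μ·tan(μ·α*) = −ρ0. -/
open Real Set

/-- Let `α* > 0` and `ρ0 > 0` be real numbers. Then for every
integer `k ≥ 1` there exists a real `μ` with `μ·α* ∈ ((k−1)π + π/2, kπ)` satisfying
`μ·tan(μ·α*) = −ρ0` (the paper's equation (K5)). -/
theorem exists_root_tan_in_interval (αs ρ0 : ℝ) (hα : 0 < αs) (hρ : 0 < ρ0)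
    (k : ℕ) (hk : 1 ≤ k) :
    ∃ μ : ℝ, μ * αs ∈ Set.Ioo (((k : ℝ) - 1) * Real.pi + Real.pi / 2) ((k : ℝ) * Real.pi)
      ∧ μ * Real.tan (μ * αs) = -ρ0 := by
  have hπ := Real.pi_pos
  set a : ℝ := ((k : ℝ) - 1) * π + π / 2 with ha
  set b : ℝ := (k : ℝ) * π with hb
  have hk1 : (1 : ℝ) ≤ (k : ℝ) := by exact_mod_cast hk
  have hab : a < b := by
    have : ((k : ℝ) - 1) * π + π / 2 < ((k : ℝ) - 1) * π + π := by linarith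
    calc a < ((k : ℝ) - 1) * π + π := this
    _ = b := by ring
  have ha_pos : 0 < a := by
    have : 0 ≤ ((k : ℝ) - 1) * π := mul_nonneg (by linarith) hπ.le
    positivity
  -- pick t very negative
  set t : ℝ := -(ρ0 * αs + 1) with ht
  have ht_neg : t < 0 := by have := mul_pos hρ hα; simp [ht]; linarith
  set c : ℝ := (k : ℝ) * π + arctan t with hc
  have harc_lt : arctan t < 0 := by
    have := Real.arctan_strictMono ht_neg
    simpa using this
  have harc_gt : -(π / 2) < arctan t := neg_pi_div_two_lt_arctan t
  have hac : a < c := by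
    simp only [hc, ha]
    have : ((k : ℝ) - 1) * π + π / 2 = (k : ℝ) * π - π / 2 := by ring
    rw [this]; linarith
  have hcb : c < b := by simp only [hc, hb]; linarith
  have h1c : 1 < c := by
    have hpi : 2 < π := by linarith [Real.pi_gt_three]
    have hha : π / 2 ≤ a := by
      have : 0 ≤ ((k : ℝ) - 1) * π := mul_nonneg (by linarith) hπ.le
      simp only [ha]; linarith
    linarith
  have htanc : Real.tan c = t := by
    have h2 : Real.tan (arctan t + (k : ℝ) * π) = Real.tan (arctan t) :=
      Real.tan_periodic.nat_mul k (arctan t)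
    rw [hc, add_comm, h2, Real.tan_arctan]
  -- cos nonzero on Icc c b
  have hcos : ∀ x ∈ Icc c b, Real.cos x ≠ 0 := by
    intro x hx hcx
    obtain ⟨n, hn⟩ := Real.cos_eq_zero_iff.1 hcx
    have hxa : a < x := lt_of_lt_of_le hac hx.1
    have hxb : x ≤ b := hx.2
    rw [hn] at hxa hxb
    have h1 : ((2 * (k : ℝ) - 1)) * (π / 2) < (2 * (n : ℝ) + 1) * (π / 2) := by
      have : a = (2 * (k : ℝ) - 1) * (π / 2) := by simp only [ha]; ring
      rw [this] at hxa
      calc (2 * (k : ℝ) - 1) * (π / 2) < (2 * (n : ℝ) + 1) * π / 2 := hxa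
      _ = (2 * (n : ℝ) + 1) * (π / 2) := by ring
    have h2 : (2 * (n : ℝ) + 1) * (π / 2) ≤ (2 * (k : ℝ)) * (π / 2) := by
      have hb' : b = (2 * (k : ℝ)) * (π / 2) := by simp only [hb]; ring
      rw [hb'] at hxb
      calc (2 * (n : ℝ) + 1) * (π / 2) = (2 * (n : ℝ) + 1) * π / 2 := by ring
      _ ≤ (2 * (k : ℝ)) * (π / 2) := hxb
    have hh : 0 < π / 2 := by linarith
    have h1' : (2 * (k : ℝ) - 1) < 2 * (n : ℝ) + 1 := lt_of_mul_lt_mul_right (by linarith [h1]) hh.le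
    have h2' : 2 * (n : ℝ) + 1 ≤ 2 * (k : ℝ) := le_of_mul_le_mul_right (by linarith [h2]) hh
    have h1i : 2 * (k : ℤ) - 1 < 2 * n + 1 := by exact_mod_cast h1'
    have h2i : 2 * n + 1 ≤ 2 * (k : ℤ) := by exact_mod_cast h2'
    omega
  -- continuity of g on Icc c b
  set g : ℝ → ℝ := fun x => x * Real.tan x with hg
  have hgcont : ContinuousOn g (Icc c b) := by
    apply ContinuousOn.mul continuousOn_id
    intro x hx
    exact (Real.continuousAt_tan.2 (hcos x hx)).continuousWithinAt
  have hgc : g c < -(ρ0 * αs) := by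
    have : g c = c * t := by simp [hg, htanc]
    rw [this]
    nlinarith [mul_pos hρ hα]
  have hgb : g b = 0 := by
    simp only [hg, hb]
    rw [Real.tan_nat_mul_pi]; ring
  have hv : -(ρ0 * αs) ∈ Icc (g c) (g b) := by
    constructor
    · exact hgc.le
    · rw [hgb]; nlinarith [mul_pos hρ hα]
  obtain ⟨x, hx, hgx⟩ := intermediate_value_Icc hcb.le hgcont hv
  have hxc : c < x := by
    rcases lt_or_eq_of_le hx.1 with h | h
    · exact h
    · exfalso; rw [← h] at hgx; linarith [hgc, hgx.symm.le, hgc]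
  have hxb : x < b := by
    rcases lt_or_eq_of_le hx.2 with h | h
    · exact h
    · exfalso; rw [h, hgb] at hgx; nlinarith [mul_pos hρ hα]
  refine ⟨x / αs, ?_, ?_⟩
  · have hxeq : x / αs * αs = x := div_mul_cancel₀ x hα.ne'
    rw [hxeq]
    exact ⟨lt_trans hac hxc, hxb⟩
  · have hxeq : x / αs * αs = x := div_mul_cancel₀ x hα.ne'
    rw [hxeq]
    have : x * Real.tan x = -(ρ0 * αs) := hgx
    field_simp
    linarith [this]
end

section
/- Let κ > 0 and α* > 0 be real numbers and a, b ∈ ℂ. Define w(r,θ) = ( a·e^{iκ·log r} + b·e^{−iκ·log r} )·cosh(κθ) for r > 0. Then for every r > 0, ∫₀^{α*} ( ∂_rw(r,θ)·conj(w(r,θ)) − w(r,θ)·conj(∂_rw(r,θ)) ) r dθ = 2iκ·(|a|² − |b|²)·∫₀^{α*} cosh²(κθ) dθ. In particular this quantity vanishes if and only if |a| = |b|. -/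
/-!
Every `w ∈ 𝒳` factors as `R(r) cosh(κθ)` with `R(r) = a r^{iκ} + b r^{-iκ}`, so the integrand is
`r (R' R̄ - R R̄') cosh²(κθ)`. Since `r^{-iκ}` is the conjugate of the unimodular `r^{iκ}`, the cross
terms `a b̄ r^{2iκ}` cancel and `r (R' R̄ - R R̄') = 2iκ(|a|² - |b|²)` for every `r`. The remaining
integral of `cosh²(κθ)` over `(0, α*)` is positive.
-/

open Complex

theorem hasDerivAt_cexp_mul_log (c : ℂ) {r : ℝ} (hr : r ≠ 0) :
    HasDerivAt (fun s : ℝ => exp (c * Real.log s)) (exp (c * Real.log r) * (c * r⁻¹)) r := by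
  simpa using (((Real.hasDerivAt_log hr).ofReal_comp).const_mul c).cexp

theorem conj_exp_I_mul_ofReal (t : ℝ) : starRingEnd ℂ (exp (I * t)) = exp (-(I * t)) := by
  rw [← exp_conj, map_mul, conj_I, conj_ofReal, neg_mul]

theorem exp_I_mul_ofReal_mul_conj (t : ℝ) : exp (I * t) * starRingEnd ℂ (exp (I * t)) = 1 := by
  rw [mul_conj', mul_comm, norm_exp_ofReal_mul_I, ofReal_one, one_pow]

section RadialFactor

variable (κ : ℝ) (a b : ℂ)

noncomputable def radialFactor (s : ℝ) : ℂ :=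
  a * exp (I * κ * Real.log s) + b * exp (-(I * κ * Real.log s))

theorem hasDerivAt_radialFactor {r : ℝ} (hr : r ≠ 0) :
    HasDerivAt (radialFactor κ a b)
      (I * κ * r⁻¹ * (a * exp (I * κ * Real.log r) - b * exp (-(I * κ * Real.log r)))) r := by
  have hplus := hasDerivAt_cexp_mul_log (I * κ) hr
  have hminus := hasDerivAt_cexp_mul_log (-(I * κ)) hr
  simp only [neg_mul] at hminus
  exact ((hplus.const_mul a).add (hminus.const_mul b)).congr_deriv (by ring)

theorem radialFactor_wronskian {r : ℝ} (hr : r ≠ 0) :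
    (deriv (radialFactor κ a b) r * starRingEnd ℂ (radialFactor κ a b r)
      - radialFactor κ a b r * starRingEnd ℂ (deriv (radialFactor κ a b) r)) * r
      = 2 * I * κ * ((‖a‖ ^ 2 - ‖b‖ ^ 2 : ℝ) : ℂ) := by
  have hI : I * (κ : ℂ) * Real.log r = I * ((κ * Real.log r : ℝ) : ℂ) := by push_cast; ring
  have hconj := conj_exp_I_mul_ofReal (κ * Real.log r)
  have hunit := exp_I_mul_ofReal_mul_conj (κ * Real.log r)
  have hr' : (r : ℂ) * (r : ℂ)⁻¹ = 1 := mul_inv_cancel₀ (ofReal_ne_zero.mpr hr)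
  rw [(hasDerivAt_radialFactor κ a b hr).deriv, radialFactor, hI, ← hconj]
  set z := exp (I * ((κ * Real.log r : ℝ) : ℂ))
  simp only [map_mul, map_add, map_sub, conj_I, conj_ofReal, conj_conj]
  push_cast
  rw [← mul_conj', ← mul_conj']
  linear_combination
    (2 * I * κ * (a * starRingEnd ℂ a - b * starRingEnd ℂ b) * z * starRingEnd ℂ z) * hr'
      + (2 * I * κ * (a * starRingEnd ℂ a - b * starRingEnd ℂ b)) * hunit

end RadialFactor

theorem integral_cosh_mul_sq_pos (κ : ℝ) {α : ℝ} (hα : 0 < α) :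
    0 < ∫ θ in (0:ℝ)..α, Real.cosh (κ * θ) ^ 2 :=
  intervalIntegral.intervalIntegral_pos_of_pos_on
    ((by fun_prop : Continuous _).intervalIntegrable _ _)
    (fun θ _ => pow_pos (Real.cosh_pos _) 2) hα

/-- With `w(r,θ) = (a·e^{iκ log r} + b·e^{−iκ log r})·cosh(κθ)`
(`a, b ∈ ℂ`), for every `r > 0`,
`∫₀^{α*}(∂_r w·conj w − w·conj ∂_r w) r dθ = 2iκ(|a|²−|b|²)∫₀^{α*}cosh²(κθ)dθ`;
in particular this quantity vanishes if and only if `|a| = |b|`. -/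
theorem symplectic_form_complex (κ αs : ℝ) (hκ : 0 < κ) (hα : 0 < αs) (a b : ℂ) :
    let w : ℝ → ℝ → ℂ := fun r θ =>
      (a * Complex.exp (Complex.I * κ * Real.log r)
        + b * Complex.exp (-(Complex.I * κ * Real.log r))) * (Real.cosh (κ * θ) : ℂ)
    ∀ r > (0 : ℝ),
      (∫ θ in (0:ℝ)..αs,
          (deriv (fun s => w s θ) r * (starRingEnd ℂ) (w r θ)
            - w r θ * (starRingEnd ℂ) (deriv (fun s => w s θ) r)) * (r : ℂ))
        = 2 * Complex.I * κ * ((‖a‖ ^ 2 - ‖b‖ ^ 2 : ℝ) : ℂ)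
            * ((∫ θ in (0:ℝ)..αs, Real.cosh (κ * θ) ^ 2 : ℝ) : ℂ) ∧
      ((∫ θ in (0:ℝ)..αs,
          (deriv (fun s => w s θ) r * (starRingEnd ℂ) (w r θ)
            - w r θ * (starRingEnd ℂ) (deriv (fun s => w s θ) r)) * (r : ℂ)) = 0
        ↔ ‖a‖ = ‖b‖) := by
  intro w r hr
  have hpointwise : ∀ θ : ℝ,
      (deriv (fun s => w s θ) r * (starRingEnd ℂ) (w r θ)
        - w r θ * (starRingEnd ℂ) (deriv (fun s => w s θ) r)) * (r : ℂ)
        = 2 * I * κ * ((‖a‖ ^ 2 - ‖b‖ ^ 2 : ℝ) : ℂ) * ((Real.cosh (κ * θ) ^ 2 : ℝ) : ℂ) := by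
    intro θ
    have hw : ∀ s, w s θ = radialFactor κ a b s * Real.cosh (κ * θ) := fun _ => rfl
    simp only [hw]
    rw [deriv_mul_const (hasDerivAt_radialFactor κ a b hr.ne').differentiableAt,
      ← radialFactor_wronskian κ a b hr.ne']
    simp only [map_mul, conj_ofReal]
    push_cast
    ring
  have hintegral : (∫ θ in (0:ℝ)..αs,
      (deriv (fun s => w s θ) r * (starRingEnd ℂ) (w r θ)
        - w r θ * (starRingEnd ℂ) (deriv (fun s => w s θ) r)) * (r : ℂ))
      = 2 * I * κ * ((‖a‖ ^ 2 - ‖b‖ ^ 2 : ℝ) : ℂ)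
        * ((∫ θ in (0:ℝ)..αs, Real.cosh (κ * θ) ^ 2 : ℝ) : ℂ) := by
    simp only [hpointwise, intervalIntegral.integral_const_mul, intervalIntegral.integral_ofReal]
  refine ⟨hintegral, ?_⟩
  have hJ := (integral_cosh_mul_sq_pos κ hα).ne'
  rw [hintegral, ← sq_eq_sq₀ (norm_nonneg a) (norm_nonneg b), ← sub_eq_zero (a := ‖a‖ ^ 2)]
  simp only [mul_eq_zero, ofReal_eq_zero, hJ, hκ.ne', I_ne_zero, two_ne_zero, or_false, false_or]
end
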